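/- Let h be the tetrahedron built from Pascal's triangle t(i,j)=C(i,j). Then because of the overall symmetry, h(i,j,k) = h(i, i-(j+k), k) for all 0 ≤ k ≤ i, 0 ≤ j ≤ i-k; equivalently, Σ_{ℓ=0}^{k} C(2ℓ+i-k, ℓ+j)·C(k,ℓ) = Σ_{ℓ=0}^{k} C(2ℓ+i-k, ℓ+i-j-k)·C(k,ℓ). -/

import Mathlib

def HP : ℕ → ℕ → ℕ → ℕ
  | i, j, 0 => i.choose j
  | i, j, k + 1 => HP (i - 1) j k + HP i j k + HP i (j + 1) k

/-! The reflection `j ↦ i - (j + k)` fixes the first term of the recurrence for `HP i j (k + 1)`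
and swaps the other two, so the symmetry of Pascal's triangle propagates by induction on `k`.
In the sums the two lower indices `ℓ + j` and `ℓ + (i - j - k)` add up to the upper index
`2ℓ + i - k`, so they agree termwise by `Nat.choose_symm`. -/

theorem HP_symm (i j k : ℕ) (h : j + k ≤ i) : HP i j k = HP i (i - (j + k)) k := by
  induction k generalizing i j with
  | zero => exact (Nat.choose_symm h).symm
  | succ k ih =>
    have hprev : HP (i - 1) j k = HP (i - 1) (i - (j + (k + 1))) k := by
      rw [ih (i - 1) j (by omega)]
      congr 1
      omega
    have hshift : HP i (j + 1) k = HP i (i - (j + (k + 1))) k := by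
      rw [ih i (j + 1) (by omega)]
      congr 1
      omega
    have hself : HP i j k = HP i (i - (j + (k + 1)) + 1) k := by
      rw [ih i j (by omega)]
      congr 1
      omega
    rw [HP, HP, hprev, hshift, hself, add_assoc, add_assoc, add_comm (HP i _ k)]

theorem choose_two_mul_add_sub_symm (ℓ i j k : ℕ) (h : j + k ≤ i) :
    (2 * ℓ + i - k).choose (ℓ + j) = (2 * ℓ + i - k).choose (ℓ + (i - j - k)) := by
  rw [← Nat.choose_symm (by omega)]
  congr 1
  omega

theorem stmt_15 (i j k : ℕ) (hk : k ≤ i) (hj : j ≤ i - k) :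
    HP i j k = HP i (i - (j + k)) k ∧
      ∑ ℓ ∈ Finset.range (k + 1), (2 * ℓ + i - k).choose (ℓ + j) * k.choose ℓ =
        ∑ ℓ ∈ Finset.range (k + 1), (2 * ℓ + i - k).choose (ℓ + (i - j - k)) * k.choose ℓ := by
  have h : j + k ≤ i := by omega
  refine ⟨HP_symm i j k h, Finset.sum_congr rfl fun ℓ _ => ?_⟩
  rw [choose_two_mul_add_sub_symm ℓ i j k h]
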